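/- For all x ≥ 1, √(2π)·x·exp(x²/2) ≥ 1 + exp(x); equivalently, 1 − exp(x)/(1+exp(x)) ≥ φ(x)/x where φ is the standard Gaussian density; combined with the Gaussian tail bound 1 − Φ(x) ≤ φ(x)/x this yields exp(x)/(1+exp(x)) ≤ Φ(x) for x ≥ 1. -/

import Mathlib

open MeasureTheory

noncomputable def stdGaussianPDF (x : ℝ) : ℝ :=
  Real.exp (-x ^ 2 / 2) / Real.sqrt (2 * Real.pi)

noncomputable def stdGaussianCDF (x : ℝ) : ℝ :=
  (Real.sqrt (2 * Real.pi))⁻¹ * ∫ t in Set.Iic x, Real.exp (-t ^ 2 / 2)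

/-!
Since `x ^ 2 / 2 ≥ x - 1 / 2` and `x ≥ 1`, we get `√(2π) x e^{x²/2} ≥ √(2π) e^{-1/2} e^x`, and
`√(2π) e^{-1/2} ≥ 3/2` because `(9/4) e < 2π`. Finally `(3/2) e^x ≥ 1 + e^x` as `e^x ≥ 2`.
Dividing by `x √(2π) e^{x²/2}` gives `φ(x)/x ≤ 1/(1 + e^x)`, and the Gaussian tail bound
`1 - Φ(x) ≤ φ(x)/x` turns this into `e^x/(1 + e^x) ≤ Φ(x)`.
-/

namespace Real

lemma three_halves_mul_exp_half_le_sqrt_two_pi : 3 / 2 * exp (1 / 2) ≤ √(2 * π) := by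
  have hexp : exp (1 / 2) ^ 2 = exp 1 := by rw [← exp_nat_mul]; norm_num
  apply le_sqrt_of_sq_le
  rw [mul_pow, hexp]
  nlinarith [exp_one_lt_d9, pi_gt_d6]

lemma exp_sub_half_le_mul_exp_sq_half {x : ℝ} (hx : 1 ≤ x) :
    exp (x - 1 / 2) ≤ x * exp (x ^ 2 / 2) :=
  calc exp (x - 1 / 2) ≤ exp (x ^ 2 / 2) := exp_le_exp.mpr (by nlinarith [sq_nonneg (x - 1)])
    _ ≤ x * exp (x ^ 2 / 2) := le_mul_of_one_le_left (exp_pos _).le hx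

lemma one_add_exp_le_sqrt_two_pi_mul_mul_exp_sq_half {x : ℝ} (hx : 1 ≤ x) :
    1 + exp x ≤ √(2 * π) * x * exp (x ^ 2 / 2) := by
  have htwo : 2 ≤ exp x := by linarith [add_one_le_exp x]
  calc 1 + exp x ≤ 3 / 2 * exp (1 / 2) * exp (x - 1 / 2) := by
        rw [mul_assoc, ← exp_add, add_sub_cancel]; linarith
    _ ≤ √(2 * π) * (x * exp (x ^ 2 / 2)) :=
        mul_le_mul three_halves_mul_exp_half_le_sqrt_two_pi
          (exp_sub_half_le_mul_exp_sq_half hx) (exp_pos _).le (sqrt_nonneg _)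
    _ = √(2 * π) * x * exp (x ^ 2 / 2) := (mul_assoc _ _ _).symm

end Real

open Real

lemma stdGaussianPDF_div_eq (x : ℝ) :
    stdGaussianPDF x / x = (√(2 * π) * x * exp (x ^ 2 / 2))⁻¹ := by
  rw [stdGaussianPDF, neg_div, exp_neg]
  field_simp

lemma one_sub_div_one_add {a : ℝ} (ha : 1 + a ≠ 0) : 1 - a / (1 + a) = (1 + a)⁻¹ := by
  field_simp
  ring

lemma stdGaussianPDF_div_le_one_sub_logistic {x : ℝ} (hx : 1 ≤ x) :
    stdGaussianPDF x / x ≤ 1 - exp x / (1 + exp x) := by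
  rw [stdGaussianPDF_div_eq, one_sub_div_one_add (by positivity)]
  exact inv_anti₀ (by positivity) (one_add_exp_le_sqrt_two_pi_mul_mul_exp_sq_half hx)

theorem logistic_le_gaussianCDF_tail
    (htail : ∀ x : ℝ, 1 ≤ x → 1 - stdGaussianCDF x ≤ stdGaussianPDF x / x) :
    (∀ x : ℝ, 1 ≤ x →
        Real.sqrt (2 * Real.pi) * x * Real.exp (x ^ 2 / 2) ≥ 1 + Real.exp x) ∧
    (∀ x : ℝ, 1 ≤ x →
        1 - Real.exp x / (1 + Real.exp x) ≥ stdGaussianPDF x / x) ∧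
    (∀ x : ℝ, 1 ≤ x →
        Real.exp x / (1 + Real.exp x) ≤ stdGaussianCDF x) :=
  ⟨fun _ hx => one_add_exp_le_sqrt_two_pi_mul_mul_exp_sq_half hx,
    fun _ hx => stdGaussianPDF_div_le_one_sub_logistic hx,
    fun x hx => by linarith [htail x hx, stdGaussianPDF_div_le_one_sub_logistic hx]⟩
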